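/- Let Δ̃ be a finite reduced crystallographic root system in a real inner product space with Weyl group W̃, positive system Δ̃⁺ and simple roots Π̃, and let Δ ⊆ Δ̃ be a symmetric, closed subsystem (−Δ = Δ, and if α, β ∈ Δ with α + β ∈ Δ̃ then α + β ∈ Δ), so that Δ is itself a root system with positive system Δ⁺ = Δ ∩ Δ̃⁺. Let W be the subgroup of W̃ generated by the reflections s_α for α ∈ Δ, and for w ∈ W let ℓ_Δ(w) = |Δ⁺ ∩ w⁻¹(−Δ⁺)| denote its number of inversions within Δ (its length in the reflection group W), while ℓ̃(w̃) = |Φ_{w̃}| denotes the length in W̃, with Φ_{w̃} = Δ̃⁺ ∩ w̃⁻¹(−Δ̃⁺). Then for w̃ ∈ W̃ the following are equivalent: (i) in every reduced expression w̃ = s_{α̃₁}···s_{α̃_q} as a product of simple reflections (α̃_i ∈ Π̃, q = ℓ̃(w̃)), all the roots α̃₁, …, α̃_q lie in Δ⁺; (ii) w̃ ∈ W and ℓ_Δ(w̃) = ℓ̃(w̃); (iii) Φ_{w̃} ⊆ Δ. -/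

import Mathlib

/-!
A symmetric closed subsystem `Δ` is stable under its own reflections: if `n = ⟨δ, γ^∨⟩ > 0` and
`δ ≠ γ`, then `δ - γ` is a root, hence lies in `Δ`, has Cartan integer `n - 2`, and
`s_γ δ = s_γ (δ - γ) - γ`; induction on `n` (and `γ ↦ -γ` when `n < 0`) concludes.

For a simple root `α` with `u α > 0` one has `Φ_{u s_α} = {α} ∪ s_α Φ_u`, so along a reduced word
`w̃ = s_{α₁} ⋯ s_{α_q}` stability gives `Φ_{w̃} ⊆ Δ ↔ α₁, …, α_q ∈ Δ`. As reduced words exist, this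
is (i) ⇔ (iii). Finally `Δ⁺ ∩ w̃⁻¹(−Δ⁺) ⊆ Φ_{w̃}`, so `ℓ_Δ(w̃) = ℓ̃(w̃)` says exactly that
`Φ_{w̃} ⊆ Δ` and `w̃ Φ_{w̃} ⊆ Δ`; the latter is automatic for `w̃ ∈ W`, which preserves `Δ`.
-/

open scoped InnerProductSpace Classical

/-- A finite reduced crystallographic root system, together with a fixed positive system
(cut out by a linear functional not vanishing on any root), in a real inner product space. -/
structure RootSystemData (E : Type*) [NormedAddCommGroup E] [InnerProductSpace ℝ E] where
  roots : Finset E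
  zero_not_mem : (0 : E) ∉ roots
  span_top : Submodule.span ℝ (roots : Set E) = ⊤
  reduced : ∀ α ∈ roots, ∀ t : ℝ, t • α ∈ roots → t = 1 ∨ t = -1
  crystallographic : ∀ α ∈ roots, ∀ β ∈ roots, ∃ n : ℤ, 2 * ⟪β, α⟫_ℝ / ⟪α, α⟫_ℝ = (n : ℝ)
  reflect_mem : ∀ α ∈ roots, ∀ β ∈ roots, β - (2 * ⟪β, α⟫_ℝ / ⟪α, α⟫_ℝ) • α ∈ roots
  posFun : E →ₗ[ℝ] ℝ
  posFun_ne_zero : ∀ α ∈ roots, posFun α ≠ 0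

namespace RootSystemData

variable {E : Type*} [NormedAddCommGroup E] [InnerProductSpace ℝ E] [FiniteDimensional ℝ E]

/-- The orthogonal reflection along the root `α` (reflection through the hyperplane `α^⊥`). -/
noncomputable def reflect (α : E) : E ≃ₗᵢ[ℝ] E := Submodule.reflection (ℝ ∙ α)ᗮ

variable (R : RootSystemData E)

/-- The Weyl group: the group of isometries generated by the reflections along the roots. -/
noncomputable def weyl : Subgroup (E ≃ₗᵢ[ℝ] E) :=
  Subgroup.closure { s | ∃ α ∈ R.roots, s = reflect α }

/-- The positive roots `Δ⁺`. -/
noncomputable def pos : Finset E := R.roots.filter fun α => 0 < R.posFun α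

/-- `ρ`, the half-sum of the positive roots. -/
noncomputable def rho : E := (2 : ℝ)⁻¹ • ∑ α ∈ R.pos, α

/-- The inversion set `Φ_w = Δ⁺ ∩ w⁻¹(Δ⁻)`. -/
noncomputable def inv (w : E ≃ₗᵢ[ℝ] E) : Finset E :=
  R.pos.filter fun α => -(w α) ∈ R.pos

/-- `⟨Φ_w⟩`, the sum of the elements of the inversion set of `w`. -/
noncomputable def invSum (w : E ≃ₗᵢ[ℝ] E) : E := ∑ α ∈ R.inv w, α

/-- The length of `w`, i.e. the cardinality of its inversion set. -/
noncomputable def len (w : E ≃ₗᵢ[ℝ] E) : ℕ := (R.inv w).card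

/-- The affine (dot) action `w · λ = w(λ + ρ) - ρ`. -/
noncomputable def dot (w : E ≃ₗᵢ[ℝ] E) (l : E) : E := w (l + R.rho) - R.rho

/-- Membership in the weight lattice `𝒫`. -/
def IsWeight (l : E) : Prop :=
  ∀ α ∈ R.roots, ∃ n : ℤ, 2 * ⟪l, α⟫_ℝ / ⟪α, α⟫_ℝ = (n : ℝ)

/-- Membership in the dominant monoid `𝒫⁺`. -/
def IsDominant (l : E) : Prop :=
  R.IsWeight l ∧ ∀ α ∈ R.pos, 0 ≤ ⟪l, α⟫_ℝ

/-- The simple roots: the indecomposable positive roots. -/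
noncomputable def simples : Finset E :=
  R.pos.filter fun α => ¬ ∃ β ∈ R.pos, ∃ γ ∈ R.pos, α = β + γ

end RootSystemData

variable {E : Type*} [NormedAddCommGroup E] [InnerProductSpace ℝ E] [FiniteDimensional ℝ E]

/-- The reflection subgroup of the Weyl group generated by the reflections along the
roots of the subsystem `D`. -/
noncomputable def subWeyl (D : Finset E) : Subgroup (E ≃ₗᵢ[ℝ] E) :=
  Subgroup.closure { s | ∃ α ∈ D, s = RootSystemData.reflect α }

/-- The number of inversions of `w` within the subsystem `D`,
i.e. `ℓ_Δ(w) = |Δ⁺ ∩ w⁻¹(−Δ⁺)|` where `Δ⁺ = Δ ∩ Δ̃⁺`. -/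
noncomputable def subLen (R : RootSystemData E) (D : Finset E) (w : E ≃ₗᵢ[ℝ] E) : ℕ :=
  ((D ∩ R.pos).filter fun α => -(w α) ∈ D ∩ R.pos).card

namespace RootSystemData

variable {V : Type*} [NormedAddCommGroup V] [InnerProductSpace ℝ V]

theorem reflect_apply (α x : V) : reflect α x = x - (2 * ⟪x, α⟫_ℝ / ⟪α, α⟫_ℝ) • α := by
  rw [reflect, Submodule.reflection_orthogonal_apply, Submodule.reflection_singleton_apply,
    real_inner_self_eq_norm_sq, real_inner_comm]
  simp only [RCLike.ofReal_real_eq_id, id, two_smul]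
  rw [div_eq_mul_inv, div_eq_mul_inv, mul_comm (2 : ℝ)]
  module

theorem reflect_self (α : V) : reflect α α = -α :=
  Submodule.reflection_orthogonalComplement_singleton_eq_neg α

theorem reflect_reflect (α x : V) : reflect α (reflect α x) = x :=
  Submodule.reflection_reflection _ x

theorem reflect_mul_self (α : V) : reflect α * reflect α = 1 :=
  Submodule.reflection_mul_reflection _

theorem reflect_inv (α : V) : (reflect α)⁻¹ = reflect α := Submodule.reflection_inv

theorem reflect_neg (α : V) : reflect (-α) = reflect α := by
  ext x
  simp only [reflect_apply, inner_neg_right, inner_neg_left, neg_neg, smul_neg, mul_neg, neg_div,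
    neg_smul]

theorem reflect_conj (u : V ≃ₗᵢ[ℝ] V) (α : V) : reflect (u α) = u * reflect α * u⁻¹ := by
  ext x
  have hx : ⟪x, u α⟫_ℝ = ⟪u⁻¹ x, α⟫_ℝ := by
    rw [← u.inner_map_map (u⁻¹ x)]
    exact congrArg (⟪·, u α⟫_ℝ) (u.apply_symm_apply x).symm
  change _ = u (reflect α (u⁻¹ x))
  rw [reflect_apply, reflect_apply, map_sub, u.map_smul, u.inner_map_map, hx]
  exact congrArg (· - _) (u.apply_symm_apply x).symm

variable (R : RootSystemData V)

theorem inner_self_pos_of_mem_roots {α : V} (h : α ∈ R.roots) : 0 < ⟪α, α⟫_ℝ :=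
  real_inner_self_pos.2 fun h0 => R.zero_not_mem (h0 ▸ h)

theorem reflect_mem_roots {α β : V} (hα : α ∈ R.roots) (hβ : β ∈ R.roots) :
    reflect α β ∈ R.roots := by
  rw [reflect_apply]
  exact R.reflect_mem α hα β hβ

theorem neg_mem_roots {α : V} (h : α ∈ R.roots) : -α ∈ R.roots := by
  simpa only [reflect_self] using R.reflect_mem_roots h h

theorem mem_pos_iff {α : V} : α ∈ R.pos ↔ α ∈ R.roots ∧ 0 < R.posFun α := Finset.mem_filter

theorem pos_subset_roots : R.pos ⊆ R.roots := Finset.filter_subset _ _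

theorem posFun_pos {α : V} (h : α ∈ R.pos) : 0 < R.posFun α := (R.mem_pos_iff.1 h).2

theorem mem_pos_or_neg_mem_pos {α : V} (h : α ∈ R.roots) : α ∈ R.pos ∨ -α ∈ R.pos := by
  rcases (R.posFun_ne_zero α h).lt_or_gt with hneg | hpos
  · exact Or.inr (R.mem_pos_iff.2 ⟨R.neg_mem_roots h, by rw [map_neg]; linarith⟩)
  · exact Or.inl (R.mem_pos_iff.2 ⟨h, hpos⟩)

theorem neg_notMem_pos {α : V} (h : α ∈ R.pos) : -α ∉ R.pos := fun hneg => by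
  have := R.posFun_pos hneg
  rw [map_neg] at this
  linarith [R.posFun_pos h]

/-- If `α ≠ β` had Cartan integers `≥ 2` in both directions, `‖α - β‖² ≤ 0` would follow. -/
theorem sub_mem_roots_of_inner_pos {α β : V} (hα : α ∈ R.roots) (hβ : β ∈ R.roots)
    (hinner : 0 < ⟪α, β⟫_ℝ) (hne : α ≠ β) : α - β ∈ R.roots := by
  obtain ⟨m, hm⟩ := R.crystallographic β hβ α hα
  obtain ⟨n, hn⟩ := R.crystallographic α hα β hβ
  rw [real_inner_comm] at hn
  have hαα := R.inner_self_pos_of_mem_roots hα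
  have hββ := R.inner_self_pos_of_mem_roots hβ
  have hm0 : (0 : ℝ) < m := hm ▸ div_pos (by linarith) hββ
  have hn0 : (0 : ℝ) < n := hn ▸ div_pos (by linarith) hαα
  rcases eq_or_ne m 1 with rfl | hm1
  · have := R.reflect_mem β hβ α hα
    rw [hm] at this
    simpa using this
  rcases eq_or_ne n 1 with rfl | hn1
  · have := R.neg_mem_roots (R.reflect_mem α hα β hβ)
    rw [real_inner_comm, hn] at this
    simpa using this
  have hm2 : (2 : ℝ) ≤ m := by
    have : 0 < m := by exact_mod_cast hm0
    exact_mod_cast (show 2 ≤ m by omega)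
  have hn2 : (2 : ℝ) ≤ n := by
    have : 0 < n := by exact_mod_cast hn0
    exact_mod_cast (show 2 ≤ n by omega)
  have hβm : 2 * ⟪α, β⟫_ℝ = m * ⟪β, β⟫_ℝ := by rw [← hm]; field_simp
  have hαn : 2 * ⟪α, β⟫_ℝ = n * ⟪α, α⟫_ℝ := by rw [← hn]; field_simp
  have hsq : ⟪α - β, α - β⟫_ℝ ≤ 0 := by
    rw [inner_sub_left, inner_sub_right, inner_sub_right, real_inner_comm α β]
    nlinarith [mul_nonneg (sub_nonneg.2 hm2) hββ.le, mul_nonneg (sub_nonneg.2 hn2) hαα.le]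
  exact absurd (sub_eq_zero.1 (real_inner_self_nonpos.1 hsq)) hne

theorem reflect_mem_of_cartan_eq_natCast {R : RootSystemData V} {D : Finset V}
    (hsub : D ⊆ R.roots) (hsymm : ∀ α ∈ D, -α ∈ D)
    (hclosed : ∀ α ∈ D, ∀ β ∈ D, α + β ∈ R.roots → α + β ∈ D) {γ : V} (hγ : γ ∈ D) (n : ℕ) :
    ∀ δ ∈ D, 2 * ⟪δ, γ⟫_ℝ / ⟪γ, γ⟫_ℝ = n → reflect γ δ ∈ D := by
  induction n using Nat.strong_induction_on with
  | _ n ih =>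
  intro δ hδ hn
  rcases Nat.eq_zero_or_pos n with rfl | hn1
  · rwa [reflect_apply, hn, Nat.cast_zero, zero_smul, sub_zero]
  rcases eq_or_ne δ γ with rfl | hδγ
  · simpa only [reflect_self] using hsymm δ hδ
  have hγγ := R.inner_self_pos_of_mem_roots (hsub hγ)
  have hinner : 0 < ⟪δ, γ⟫_ℝ := by
    have : (0 : ℝ) < 2 * ⟪δ, γ⟫_ℝ / ⟪γ, γ⟫_ℝ := hn ▸ Nat.cast_pos.2 hn1
    have := (div_pos_iff_of_pos_right hγγ).1 this
    linarith
  have hδγD : δ - γ ∈ D := by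
    have := R.sub_mem_roots_of_inner_pos (hsub hδ) (hsub hγ) hinner hδγ
    rw [sub_eq_add_neg] at this ⊢
    exact hclosed δ hδ (-γ) (hsymm γ hγ) this
  obtain rfl | hn2 : n = 1 ∨ 2 ≤ n := by omega
  · rwa [reflect_apply, hn, Nat.cast_one, one_smul]
  have hcartan : 2 * ⟪δ - γ, γ⟫_ℝ / ⟪γ, γ⟫_ℝ = ((n - 2 : ℕ) : ℝ) := by
    rw [Nat.cast_sub hn2, ← hn, inner_sub_left]
    field_simp
    ring
  have hsplit : reflect γ δ = reflect γ (δ - γ) + -γ := by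
    rw [map_sub, reflect_self, sub_neg_eq_add, add_neg_cancel_right]
  rw [hsplit]
  refine hclosed _ (ih (n - 2) (by omega) _ hδγD hcartan) _ (hsymm γ hγ) ?_
  exact hsplit ▸ R.reflect_mem_roots (hsub hγ) (hsub hδ)

theorem reflect_mem_of_closed {R : RootSystemData V} {D : Finset V} (hsub : D ⊆ R.roots)
    (hsymm : ∀ α ∈ D, -α ∈ D) (hclosed : ∀ α ∈ D, ∀ β ∈ D, α + β ∈ R.roots → α + β ∈ D)
    {γ δ : V} (hγ : γ ∈ D) (hδ : δ ∈ D) : reflect γ δ ∈ D := by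
  obtain ⟨m, hm⟩ := R.crystallographic γ (hsub hγ) δ (hsub hδ)
  obtain ⟨n, rfl | rfl⟩ := Int.eq_nat_or_neg m
  · exact reflect_mem_of_cartan_eq_natCast hsub hsymm hclosed hγ n δ hδ hm
  · rw [← reflect_neg]
    refine reflect_mem_of_cartan_eq_natCast hsub hsymm hclosed (hsymm γ hγ) n δ hδ ?_
    rw [inner_neg_right, inner_neg_neg, ← neg_mul_eq_mul_neg, neg_div, hm, Int.cast_neg,
      Int.cast_natCast, neg_neg]

theorem mem_simples_iff {α : V} :
    α ∈ R.simples ↔ α ∈ R.pos ∧ ¬∃ β ∈ R.pos, ∃ γ ∈ R.pos, α = β + γ := Finset.mem_filter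

theorem simples_subset_pos : R.simples ⊆ R.pos := Finset.filter_subset _ _

theorem simples_subset_roots : R.simples ⊆ R.roots := R.simples_subset_pos.trans R.pos_subset_roots

theorem inner_nonpos_of_mem_simples {α β : V} (hα : α ∈ R.simples) (hβ : β ∈ R.simples)
    (hne : α ≠ β) : ⟪α, β⟫_ℝ ≤ 0 := by
  by_contra! hinner
  have hsub := R.sub_mem_roots_of_inner_pos (R.simples_subset_roots hα) (R.simples_subset_roots hβ)
    hinner hne
  rcases R.mem_pos_or_neg_mem_pos hsub with h | h
  · exact (R.mem_simples_iff.1 hα).2 ⟨β, R.simples_subset_pos hβ, α - β, h, by abel⟩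
  · exact (R.mem_simples_iff.1 hβ).2 ⟨α, R.simples_subset_pos hα, -(α - β), h, by abel⟩

theorem pos_induction {P : V → Prop}
    (h : ∀ β ∈ R.pos, (∀ δ ∈ R.pos, R.posFun δ < R.posFun β → P δ) → P β) :
    ∀ β ∈ R.pos, P β := by
  intro β
  induction hn : (R.pos.filter fun δ => R.posFun δ < R.posFun β).card
    using Nat.strong_induction_on generalizing β with
  | _ n ih =>
  refine fun hβ => h β hβ fun δ hδ hlt => ih _ ?_ δ rfl hδ
  rw [← hn]
  refine Finset.card_lt_card ⟨fun x hx => ?_, fun hsub => ?_⟩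
  · rw [Finset.mem_filter] at hx ⊢
    exact ⟨hx.1, hx.2.trans hlt⟩
  · exact (hsub (Finset.mem_filter.2 ⟨hδ, hlt⟩) |> Finset.mem_filter.1).2.false

theorem pos_induction_add {P : V → Prop} (simple : ∀ α ∈ R.simples, P α)
    (add : ∀ β₁ ∈ R.pos, ∀ β₂ ∈ R.pos, β₁ + β₂ ∈ R.pos → P β₁ → P β₂ → P (β₁ + β₂)) :
    ∀ β ∈ R.pos, P β := by
  refine R.pos_induction fun β hβ ih => ?_
  by_cases hs : β ∈ R.simples
  · exact simple β hs
  obtain ⟨β₁, h₁, β₂, h₂, rfl⟩ : ∃ β₁ ∈ R.pos, ∃ β₂ ∈ R.pos, β = β₁ + β₂ := by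
    by_contra h
    exact hs (R.mem_simples_iff.2 ⟨hβ, h⟩)
  have := R.posFun_pos h₁
  have := R.posFun_pos h₂
  exact add β₁ h₁ β₂ h₂ hβ (ih β₁ h₁ (by rw [map_add]; linarith))
    (ih β₂ h₂ (by rw [map_add]; linarith))

theorem mem_pos_of_add {α β : V} (hroot : α + β ∈ R.roots) (hα : α ∈ R.pos) (hβ : β ∈ R.pos) :
    α + β ∈ R.pos :=
  R.mem_pos_iff.2 ⟨hroot, by rw [map_add]; linarith [R.posFun_pos hα, R.posFun_pos hβ]⟩

/-- If `s_α(α + β)` were negative, `α = s_α β + (-s_α(α + β))` would decompose `α`. -/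
theorem reflect_add_self_mem_pos {α β : V} (hα : α ∈ R.simples) (hβ : reflect α β ∈ R.pos)
    (hroot : α + β ∈ R.roots) : reflect α (α + β) ∈ R.pos := by
  have hrefl := R.reflect_mem_roots (R.simples_subset_roots hα) hroot
  refine (R.mem_pos_or_neg_mem_pos hrefl).resolve_right fun hneg => (R.mem_simples_iff.1 hα).2
    ⟨reflect α β, hβ, _, hneg, ?_⟩
  rw [map_add, reflect_self]
  abel

theorem reflect_mem_pos {α β : V} (hα : α ∈ R.simples) (hβ : β ∈ R.pos) (hne : β ≠ α) :
    reflect α β ∈ R.pos := by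
  have hαr := R.simples_subset_roots hα
  revert hne
  refine R.pos_induction_add (P := fun β => β ≠ α → reflect α β ∈ R.pos) ?_ ?_ β hβ
  · intro γ hγ hne
    have hobtuse := R.inner_nonpos_of_mem_simples hγ hα hne
    have hcoeff : 2 * ⟪γ, α⟫_ℝ / ⟪α, α⟫_ℝ ≤ 0 :=
      div_nonpos_of_nonpos_of_nonneg (by linarith) (R.inner_self_pos_of_mem_roots hαr).le
    refine R.mem_pos_iff.2 ⟨R.reflect_mem_roots hαr (R.simples_subset_roots hγ), ?_⟩
    rw [reflect_apply, map_sub, map_smul, smul_eq_mul]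
    nlinarith [R.posFun_pos (R.simples_subset_pos hα), R.posFun_pos (R.simples_subset_pos hγ)]
  · intro β₁ h₁ β₂ h₂ hsum ih₁ ih₂ _
    have hroot := R.pos_subset_roots hsum
    rcases eq_or_ne β₁ α with rfl | hne₁
    · rcases eq_or_ne β₂ β₁ with rfl | hne₂
      · have := R.reduced β₂ (R.pos_subset_roots h₂) 2 (by rwa [two_smul])
        norm_num at this
      · exact R.reflect_add_self_mem_pos hα (ih₂ hne₂) hroot
    rcases eq_or_ne β₂ α with rfl | hne₂
    · rw [add_comm] at hroot ⊢
      exact R.reflect_add_self_mem_pos hα (ih₁ hne₁) hroot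
    have hrefl := R.reflect_mem_roots hαr hroot
    rw [map_add] at hrefl ⊢
    exact R.mem_pos_of_add hrefl (ih₁ hne₁) (ih₂ hne₂)

theorem exists_mem_simples_inner_pos {β : V} (hβ : β ∈ R.pos) :
    ∃ γ ∈ R.simples, 0 < ⟪β, γ⟫_ℝ := by
  by_contra! h
  have hobtuse : ∀ δ ∈ R.pos, ⟪β, δ⟫_ℝ ≤ 0 := R.pos_induction_add h
    fun _ _ _ _ _ h₁ h₂ => by rw [inner_add_right]; linarith
  exact (hobtuse β hβ).not_gt (R.inner_self_pos_of_mem_roots (R.pos_subset_roots hβ))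

theorem reflect_mem_closure_simples {β : V} (hβ : β ∈ R.pos) :
    reflect β ∈ Subgroup.closure {s | ∃ α ∈ R.simples, s = reflect α} := by
  refine R.pos_induction (P := fun β => reflect β ∈ _) (fun β hβ ih => ?_) β hβ
  by_cases hs : β ∈ R.simples
  · exact Subgroup.subset_closure ⟨β, hs, rfl⟩
  obtain ⟨γ, hγ, hinner⟩ := R.exists_mem_simples_inner_pos hβ
  have hγmem : reflect γ ∈ Subgroup.closure {s | ∃ α ∈ R.simples, s = reflect α} :=
    Subgroup.subset_closure ⟨γ, hγ, rfl⟩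
  have hδ := R.reflect_mem_pos hγ hβ fun h => hs (h ▸ hγ)
  have hlt : R.posFun (reflect γ β) < R.posFun β := by
    have hcoeff : 0 < 2 * ⟪β, γ⟫_ℝ / ⟪γ, γ⟫_ℝ :=
      div_pos (by linarith) (R.inner_self_pos_of_mem_roots (R.simples_subset_roots hγ))
    rw [reflect_apply, map_sub, map_smul, smul_eq_mul]
    nlinarith [R.posFun_pos (R.simples_subset_pos hγ)]
  have hconj := reflect_conj (reflect γ) (reflect γ β)
  rw [reflect_reflect, reflect_inv] at hconj
  rw [hconj]
  exact mul_mem (mul_mem hγmem (ih _ hδ hlt)) hγmem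

theorem weyl_le_closure_simples :
    R.weyl ≤ Subgroup.closure {s | ∃ α ∈ R.simples, s = reflect α} := by
  refine Subgroup.closure_le _ |>.2 ?_
  rintro _ ⟨β, hβ, rfl⟩
  rcases R.mem_pos_or_neg_mem_pos hβ with h | h
  · exact R.reflect_mem_closure_simples h
  · exact reflect_neg β ▸ R.reflect_mem_closure_simples h

theorem exists_simple_word {w : V ≃ₗᵢ[ℝ] V} (hw : w ∈ R.weyl) :
    ∃ L : List V, (∀ γ ∈ L, γ ∈ R.simples) ∧ (L.map reflect).prod = w := by
  replace hw := R.weyl_le_closure_simples hw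
  induction hw using Subgroup.closure_induction_left with
  | one => exact ⟨[], by simp, rfl⟩
  | mul_left _ hx _ _ ih =>
    obtain ⟨α, hα, rfl⟩ := hx
    obtain ⟨L, hL, rfl⟩ := ih
    exact ⟨α :: L, by simpa [hα] using hL, by simp⟩
  | inv_mul_cancel _ hx _ _ ih =>
    obtain ⟨α, hα, rfl⟩ := hx
    obtain ⟨L, hL, rfl⟩ := ih
    exact ⟨α :: L, by simpa [hα] using hL, by simp [reflect_inv]⟩

theorem list_prod_map_reflect_apply_mem {S : Finset V} {L : List V}
    (hS : ∀ γ ∈ L, ∀ δ ∈ S, reflect γ δ ∈ S) {δ : V} (hδ : δ ∈ S) :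
    (L.map reflect).prod δ ∈ S := by
  induction L with
  | nil => exact hδ
  | cons γ L ih =>
    rw [List.map_cons, List.prod_cons, LinearIsometryEquiv.coe_mul, Function.comp_apply]
    exact hS γ List.mem_cons_self _ (ih fun γ hγ => hS γ (List.mem_cons_of_mem _ hγ))

theorem list_prod_apply_mem_roots {L : List V} (hL : ∀ γ ∈ L, γ ∈ R.simples) {β : V}
    (hβ : β ∈ R.roots) : (L.map reflect).prod β ∈ R.roots :=
  list_prod_map_reflect_apply_mem
    (fun γ hγ _ hδ => R.reflect_mem_roots (R.simples_subset_roots (hL γ hγ)) hδ) hβ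

theorem mem_inv {w : V ≃ₗᵢ[ℝ] V} {β : V} : β ∈ R.inv w ↔ β ∈ R.pos ∧ -(w β) ∈ R.pos :=
  Finset.mem_filter

theorem inv_one_eq_empty : R.inv 1 = ∅ :=
  Finset.eq_empty_of_forall_notMem fun _ hβ =>
    R.neg_notMem_pos (R.mem_inv.1 hβ).1 (R.mem_inv.1 hβ).2

theorem inv_mul_reflect {w : V ≃ₗᵢ[ℝ] V} {α : V} (hα : α ∈ R.simples) (h : w α ∈ R.pos) :
    R.inv (w * reflect α) = insert α ((R.inv w).image (reflect α)) := by
  ext β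
  simp only [Finset.mem_insert, Finset.mem_image, mem_inv, LinearIsometryEquiv.coe_mul,
    Function.comp_apply]
  constructor
  · rintro ⟨hβ, hwβ⟩
    refine (eq_or_ne β α).imp id fun hne => ⟨reflect α β, ?_, reflect_reflect α β⟩
    exact ⟨R.reflect_mem_pos hα hβ hne, hwβ⟩
  · rintro (rfl | ⟨δ, ⟨hδ, hwδ⟩, rfl⟩)
    · rw [reflect_self, map_neg, neg_neg]
      exact ⟨R.simples_subset_pos hα, h⟩
    · have hne : δ ≠ α := by
        rintro rfl
        exact R.neg_notMem_pos h hwδ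
      rw [reflect_reflect]
      exact ⟨R.reflect_mem_pos hα hδ hne, hwδ⟩

theorem len_mul_reflect {w : V ≃ₗᵢ[ℝ] V} {α : V} (hα : α ∈ R.simples) (h : w α ∈ R.pos) :
    R.len (w * reflect α) = R.len w + 1 := by
  have hnotMem : α ∉ (R.inv w).image (reflect α) := by
    intro hmem
    obtain ⟨δ, hδ, hδα⟩ := Finset.mem_image.1 hmem
    rw [← reflect_reflect α δ, hδα, reflect_self] at hδ
    exact R.neg_notMem_pos (R.simples_subset_pos hα) (R.mem_inv.1 hδ).1
  rw [len, len, R.inv_mul_reflect hα h, Finset.card_insert_of_notMem hnotMem,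
    Finset.card_image_of_injective _ (reflect α).injective]

theorem len_mul_reflect_of_neg {w : V ≃ₗᵢ[ℝ] V} {α : V} (hα : α ∈ R.simples)
    (h : -(w α) ∈ R.pos) : R.len (w * reflect α) + 1 = R.len w := by
  have := R.len_mul_reflect (w := w * reflect α) hα (by simpa [reflect_self] using h)
  rwa [mul_assoc, reflect_mul_self, mul_one, eq_comm] at this

theorem len_list_prod_le {L : List V} (hL : ∀ γ ∈ L, γ ∈ R.simples) :
    R.len (L.map reflect).prod ≤ L.length := by
  induction L using List.reverseRecOn with
  | nil => simp [len, inv_one_eq_empty]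
  | append_singleton T α ih =>
    simp only [List.forall_mem_append, List.forall_mem_singleton] at hL
    have hle := ih hL.1
    simp only [List.map_append, List.map_singleton, List.prod_append, List.prod_singleton,
      List.length_append, List.length_singleton]
    rcases R.mem_pos_or_neg_mem_pos (R.list_prod_apply_mem_roots hL.1
      (R.simples_subset_roots hL.2)) with h | h
    · rw [R.len_mul_reflect hL.2 h]
      omega
    · have := R.len_mul_reflect_of_neg hL.2 h
      omega

theorem exists_word_eq_mul_reflect {L : List V} (hL : ∀ γ ∈ L, γ ∈ R.simples) {α : V}
    (hα : α ∈ R.simples) (h : -((L.map reflect).prod α) ∈ R.pos) :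
    ∃ L' : List V, (∀ γ ∈ L', γ ∈ R.simples) ∧
      (L'.map reflect).prod = (L.map reflect).prod * reflect α ∧ L'.length + 1 = L.length := by
  induction L with
  | nil => exact absurd h (R.neg_notMem_pos (R.simples_subset_pos hα))
  | cons γ T ih =>
    simp only [List.forall_mem_cons] at hL
    simp only [List.map_cons, List.prod_cons, LinearIsometryEquiv.coe_mul,
      Function.comp_apply] at h ⊢
    set u := (T.map reflect).prod
    rcases R.mem_pos_or_neg_mem_pos (R.list_prod_apply_mem_roots hL.2
      (R.simples_subset_roots hα)) with hpos | hneg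
    · have huα : u α = γ := by
        by_contra hne
        exact R.neg_notMem_pos (R.reflect_mem_pos hL.1 hpos hne) h
      refine ⟨T, hL.2, ?_, rfl⟩
      rw [← huα, reflect_conj, inv_mul_cancel_right, mul_assoc, reflect_mul_self, mul_one]
    · obtain ⟨T', hT', hT'u, hlen⟩ := ih hL.2 hneg
      refine ⟨γ :: T', List.forall_mem_cons.2 ⟨hL.1, hT'⟩, ?_, by simp [hlen]⟩
      rw [List.map_cons, List.prod_cons, hT'u, mul_assoc]

theorem exists_shorter_word {L : List V} (hL : ∀ γ ∈ L, γ ∈ R.simples)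
    (hlt : R.len (L.map reflect).prod < L.length) :
    ∃ L' : List V, (∀ γ ∈ L', γ ∈ R.simples) ∧
      (L'.map reflect).prod = (L.map reflect).prod ∧ L'.length < L.length := by
  induction L using List.reverseRecOn with
  | nil => simp at hlt
  | append_singleton T α ih =>
    simp only [List.forall_mem_append, List.forall_mem_singleton] at hL
    simp only [List.map_append, List.map_singleton, List.prod_append, List.prod_singleton,
      List.length_append, List.length_singleton] at hlt ⊢
    rcases R.mem_pos_or_neg_mem_pos (R.list_prod_apply_mem_roots hL.1
      (R.simples_subset_roots hL.2)) with h | h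
    · rw [R.len_mul_reflect hL.2 h] at hlt
      obtain ⟨T', hT', hT'w, hlen⟩ := ih hL.1 (by omega)
      refine ⟨T' ++ [α], ?_, by simp [hT'w], by simp [hlen]⟩
      simpa only [List.forall_mem_append, List.forall_mem_singleton] using ⟨hT', hL.2⟩
    · obtain ⟨K, hK, hKw, hlen⟩ := R.exists_word_eq_mul_reflect hL.1 hL.2 h
      exact ⟨K, hK, hKw, by omega⟩

theorem exists_reduced_word {w : V ≃ₗᵢ[ℝ] V} (hw : w ∈ R.weyl) :
    ∃ L : List V, (∀ γ ∈ L, γ ∈ R.simples) ∧ (L.map reflect).prod = w ∧ L.length = R.len w := by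
  have hex : ∃ n, ∃ L : List V, (∀ γ ∈ L, γ ∈ R.simples) ∧ (L.map reflect).prod = w ∧
      L.length = n :=
    let ⟨L, hL, hLw⟩ := R.exists_simple_word hw
    ⟨_, L, hL, hLw, rfl⟩
  obtain ⟨L, hL, hLw, hLn⟩ := Nat.find_spec hex
  refine ⟨L, hL, hLw, le_antisymm ?_ (hLw ▸ R.len_list_prod_le hL)⟩
  by_contra! hlt
  obtain ⟨L', hL', hL'w, hlt'⟩ := R.exists_shorter_word hL (hLw ▸ hlt)
  exact Nat.find_min hex (hLn ▸ hlt') ⟨L', hL', hL'w.trans hLw, rfl⟩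

theorem reduced_of_append_singleton {T : List V} {α : V} (hT : ∀ γ ∈ T, γ ∈ R.simples)
    (hα : α ∈ R.simples)
    (hred : (T ++ [α]).length = R.len ((T ++ [α]).map reflect).prod) :
    T.length = R.len (T.map reflect).prod ∧ (T.map reflect).prod α ∈ R.pos := by
  simp only [List.map_append, List.map_singleton, List.prod_append, List.prod_singleton,
    List.length_append, List.length_singleton] at hred
  have hle := R.len_list_prod_le hT
  rcases R.mem_pos_or_neg_mem_pos (R.list_prod_apply_mem_roots hT
    (R.simples_subset_roots hα)) with h | h
  · rw [R.len_mul_reflect hα h] at hred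
    exact ⟨by omega, h⟩
  · have := R.len_mul_reflect_of_neg hα h
    omega

theorem image_reflect_subset_iff {D : Finset V} (hD : ∀ γ ∈ D, ∀ δ ∈ D, reflect γ δ ∈ D)
    {α : V} (hα : α ∈ D) {s : Finset V} : s.image (reflect α) ⊆ D ↔ s ⊆ D := by
  refine Finset.image_subset_iff.trans ⟨fun h δ hδ => ?_, fun h δ hδ => hD α hα δ (h hδ)⟩
  simpa only [reflect_reflect] using hD α hα _ (h δ hδ)

theorem inv_list_prod_subset_iff {D : Finset V} (hD : ∀ γ ∈ D, ∀ δ ∈ D, reflect γ δ ∈ D)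
    {L : List V} (hL : ∀ γ ∈ L, γ ∈ R.simples)
    (hred : L.length = R.len (L.map reflect).prod) :
    R.inv (L.map reflect).prod ⊆ D ↔ ∀ α ∈ L, α ∈ D := by
  induction L using List.reverseRecOn with
  | nil => simp [inv_one_eq_empty]
  | append_singleton T α ih =>
    simp only [List.forall_mem_append, List.forall_mem_singleton] at hL ⊢
    obtain ⟨hredT, hpos⟩ := R.reduced_of_append_singleton hL.1 hL.2 hred
    simp only [List.map_append, List.map_singleton, List.prod_append, List.prod_singleton]
    rw [R.inv_mul_reflect hL.2 hpos, Finset.insert_subset_iff, ← ih hL.1 hredT]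
    exact ⟨fun ⟨hα, h⟩ => ⟨(image_reflect_subset_iff hD hα).1 h, hα⟩,
      fun ⟨h, hα⟩ => ⟨hα, (image_reflect_subset_iff hD hα).2 h⟩⟩

theorem subLen_eq_len_iff (D : Finset V) (w : V ≃ₗᵢ[ℝ] V) :
    subLen R D w = R.len w ↔ ∀ β ∈ R.inv w, β ∈ D ∧ -(w β) ∈ D := by
  have hfilter : ((D ∩ R.pos).filter fun β => -(w β) ∈ D ∩ R.pos) =
      (R.inv w).filter fun β => β ∈ D ∧ -(w β) ∈ D := by
    ext β
    simp only [Finset.mem_filter, Finset.mem_inter, mem_inv]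
    tauto
  rw [subLen, len, hfilter, Finset.card_filter_eq_iff]

theorem list_prod_mem_subWeyl {D : Finset V} {L : List V} (hL : ∀ γ ∈ L, γ ∈ D) :
    (L.map reflect).prod ∈ subWeyl D :=
  Subgroup.list_prod_mem _ <| List.forall_mem_map.2 fun γ hγ =>
    Subgroup.subset_closure ⟨γ, hL γ hγ, rfl⟩

end RootSystemData

/-- Lemma 3.2: for a symmetric closed subsystem `Δ ⊆ Δ̃` and `w̃ ∈ W̃`, the following are
equivalent: (i) every reduced expression of `w̃` consists of simple reflections along roots in
`Δ⁺ = Δ ∩ Δ̃⁺`; (ii) `w̃` lies in the reflection subgroup `W` generated by `Δ` and its length in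
`W` equals its length in `W̃`; (iii) `Φ_{w̃} ⊆ Δ`. -/
theorem subsystem_length_tfae
    (R : RootSystemData E) (D : Finset E)
    (hsub : D ⊆ R.roots)
    (hsymm : ∀ α ∈ D, -α ∈ D)
    (hclosed : ∀ α ∈ D, ∀ β ∈ D, α + β ∈ R.roots → α + β ∈ D)
    (w : E ≃ₗᵢ[ℝ] E) (hw : w ∈ R.weyl) :
    ((∀ L : List E, (∀ α ∈ L, α ∈ R.simples) →
        (L.map RootSystemData.reflect).prod = w → L.length = R.len w →
        ∀ α ∈ L, α ∈ D ∩ R.pos)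
      ↔ (w ∈ subWeyl D ∧ subLen R D w = R.len w))
    ∧ ((w ∈ subWeyl D ∧ subLen R D w = R.len w) ↔ R.inv w ⊆ D) := by
  have hD : ∀ γ ∈ D, ∀ δ ∈ D, RootSystemData.reflect γ δ ∈ D := fun _ hγ _ hδ =>
    RootSystemData.reflect_mem_of_closed hsub hsymm hclosed hγ hδ
  obtain ⟨L, hL, hLw, hLlen⟩ := R.exists_reduced_word hw
  have hinv_iff : R.inv w ⊆ D ↔ ∀ α ∈ L, α ∈ D :=
    hLw ▸ R.inv_list_prod_subset_iff hD hL (hLw ▸ hLlen)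
  have hi_iff_iii : (∀ L : List E, (∀ α ∈ L, α ∈ R.simples) →
      (L.map RootSystemData.reflect).prod = w → L.length = R.len w →
      ∀ α ∈ L, α ∈ D ∩ R.pos) ↔ R.inv w ⊆ D := by
    refine ⟨fun h => hinv_iff.2 fun α hα => (Finset.mem_inter.1 (h L hL hLw hLlen α hα)).1,
      fun h L' hL' hL'w hL'len α hα => ?_⟩
    subst hL'w
    exact Finset.mem_inter.2 ⟨(R.inv_list_prod_subset_iff hD hL' hL'len).1 h α hα,
      R.simples_subset_pos (hL' α hα)⟩
  have hii_iff_iii : (w ∈ subWeyl D ∧ subLen R D w = R.len w) ↔ R.inv w ⊆ D := by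
    rw [R.subLen_eq_len_iff]
    refine ⟨fun ⟨_, h⟩ β hβ => (h β hβ).1, fun h => ⟨?_, fun β hβ => ⟨h hβ, hsymm _ ?_⟩⟩⟩
    · exact hLw ▸ RootSystemData.list_prod_mem_subWeyl (hinv_iff.1 h)
    · rw [← hLw]
      exact RootSystemData.list_prod_map_reflect_apply_mem
        (fun γ hγ => hD γ (hinv_iff.1 h γ hγ)) (h hβ)
  exact ⟨hi_iff_iii.trans hii_iff_iii.symm, hii_iff_iii⟩
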